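/- If ρ is a smooth positive solution of the heat equation ∂t ρ = μΔρ and u = -μ∇log ρ, then ρ(∂t u + (u·∇)u) - μ div(ρ Du) = 0, where Du denotes the symmetric gradient (Du)_{ij} = (∂_i u_j + ∂_j u_i)/2; i.e., (ρ, u) is an exact solution of the pressureless viscous shallow-water momentum equation with viscosity μ(ρ) = μρ. -/

import Mathlib

noncomputable section

/-- Partial derivative in direction `i` of a function on `Fin N → ℝ`. -/
def pd {N : ℕ} (i : Fin N) (f : (Fin N → ℝ) → ℝ) (x : Fin N → ℝ) : ℝ :=
  fderiv ℝ f x (Pi.single i 1)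

/-- Time derivative of a time-dependent function. -/
def dt {N : ℕ} (f : ℝ → (Fin N → ℝ) → ℝ) (t : ℝ) (x : Fin N → ℝ) : ℝ :=
  deriv (fun s => f s x) t

/-- Symmetric gradient `(Du)_{ij} = (∂_i u_j + ∂_j u_i)/2`. -/
def symGrad {N : ℕ} (u : (Fin N → ℝ) → Fin N → ℝ) (i j : Fin N) (x : Fin N → ℝ) : ℝ :=
  (pd i (fun y => u y j) x + pd j (fun y => u y i) x) / 2

open scoped ContDiff

namespace QSM

variable {E : Type*} [NormedAddCommGroup E] [NormedSpace ℝ E]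

/-- Directional derivative. -/
def dd (v : E) (g : E → ℝ) (p : E) : ℝ := fderiv ℝ g p v

lemma one_le_inf : (1 : WithTop ℕ∞) ≤ ∞ := by exact_mod_cast le_top

lemma diffAt {G : Type*} [NormedAddCommGroup G] [NormedSpace ℝ G] {g : E → G}
    (hg : ContDiff ℝ ∞ g) (p : E) : DifferentiableAt ℝ g p :=
  (hg.differentiable (by simp)).differentiableAt

lemma contDiff_dd {g : E → ℝ} (hg : ContDiff ℝ ∞ g) (v : E) :
    ContDiff ℝ ∞ (dd v g) := by
  have h1 : ContDiff ℝ ∞ (fderiv ℝ g) := hg.fderiv_right (le_of_eq rfl)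
  exact (ContinuousLinearMap.apply ℝ ℝ v).contDiff.comp h1

lemma dd_eq_snd_fderiv {g : E → ℝ} (hg : ContDiff ℝ ∞ g) (v w : E) (p : E) :
    dd w (dd v g) p = fderiv ℝ (fderiv ℝ g) p w v := by
  have h1 : ContDiff ℝ ∞ (fderiv ℝ g) := hg.fderiv_right (le_of_eq rfl)
  have h2 : HasFDerivAt (fun q => dd v g q)
      ((ContinuousLinearMap.apply ℝ ℝ v).comp (fderiv ℝ (fderiv ℝ g) p)) p :=
    (ContinuousLinearMap.apply ℝ ℝ v).hasFDerivAt.comp p (diffAt h1 p).hasFDerivAt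
  show fderiv ℝ (fun q => dd v g q) p w = _
  rw [h2.fderiv]
  rfl

lemma dd_comm {g : E → ℝ} (hg : ContDiff ℝ ∞ g) (v w : E) (p : E) :
    dd w (dd v g) p = dd v (dd w g) p := by
  rw [dd_eq_snd_fderiv hg, dd_eq_snd_fderiv hg]
  exact (hg.contDiffAt.isSymmSndFDerivAt (by
    have h2 : ((2:ℕ∞) : WithTop ℕ∞) ≤ ((⊤:ℕ∞) : WithTop ℕ∞) := WithTop.coe_le_coe.2 le_top
    simpa using h2)).eq w v

lemma dd_mul {f g : E → ℝ} (hf : DifferentiableAt ℝ f p) (hg : DifferentiableAt ℝ g p)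
    (v : E) : dd v (fun q => f q * g q) p = dd v f p * g p + f p * dd v g p := by
  show fderiv ℝ (fun q => f q * g q) p v = _
  rw [fderiv_fun_mul hf hg]
  simp [dd]
  ring

lemma dd_const_mul {g : E → ℝ} (hg : DifferentiableAt ℝ g p) (c : ℝ) (v : E) :
    dd v (fun q => c * g q) p = c * dd v g p := by
  show fderiv ℝ (fun q => c * g q) p v = _
  rw [fderiv_const_mul hg c]
  rfl

lemma dd_log {F : E → ℝ} (hF : ContDiff ℝ ∞ F) (hpos : ∀ q, 0 < F q) (v : E) (p : E) :
    dd v F p = F p * dd v (fun q => Real.log (F q)) p := by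
  have h : HasFDerivAt (fun q => Real.log (F q)) ((F p)⁻¹ • fderiv ℝ F p) p :=
    (Real.hasDerivAt_log (hpos p).ne').comp_hasFDerivAt p (diffAt hF p).hasFDerivAt
  have h2 : dd v (fun q => Real.log (F q)) p = (F p)⁻¹ * dd v F p := by
    show fderiv ℝ (fun q => Real.log (F q)) p v = _
    rw [h.fderiv]; rfl
  rw [h2, ← mul_assoc, mul_inv_cancel₀ (hpos p).ne', one_mul]

end QSM

open QSM

section Slice

variable {N : ℕ}

lemma slice_pd {g : ℝ × (Fin N → ℝ) → ℝ} {t : ℝ} {x : Fin N → ℝ}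
    (hg : DifferentiableAt ℝ g (t, x)) (i : Fin N) :
    pd i (fun y => g (t, y)) x = dd ((0 : ℝ), Pi.single i 1) g (t, x) := by
  have hins : HasFDerivAt (fun y : Fin N → ℝ => ((t : ℝ), y))
      (ContinuousLinearMap.inr ℝ ℝ (Fin N → ℝ)) x :=
    HasFDerivAt.prodMk (hasFDerivAt_const t x) (hasFDerivAt_id x)
  have h2 : fderiv ℝ (fun y => g (t, y)) x
      = (fderiv ℝ g (t, x)).comp (ContinuousLinearMap.inr ℝ ℝ (Fin N → ℝ)) :=
    (hg.hasFDerivAt.comp x hins).fderiv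
  show fderiv ℝ (fun y => g (t, y)) x (Pi.single i 1) = _
  rw [h2]
  rfl

lemma slice_dt {g : ℝ × (Fin N → ℝ) → ℝ} {t : ℝ} {x : Fin N → ℝ}
    (hg : DifferentiableAt ℝ g (t, x)) :
    deriv (fun s => g (s, x)) t = dd ((1 : ℝ), (0 : Fin N → ℝ)) g (t, x) := by
  have hins : HasFDerivAt (fun s : ℝ => (s, x))
      (ContinuousLinearMap.inl ℝ ℝ (Fin N → ℝ)) t :=
    HasFDerivAt.prodMk (hasFDerivAt_id t) (hasFDerivAt_const x t)
  have h2 : fderiv ℝ (fun s => g (s, x)) t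
      = (fderiv ℝ g (t, x)).comp (ContinuousLinearMap.inl ℝ ℝ (Fin N → ℝ)) :=
    (hg.hasFDerivAt.comp t hins).fderiv
  rw [← fderiv_apply_one_eq_deriv, h2]
  rfl

end Slice

theorem quasi_solution_momentum
    (N : ℕ) (hN : 1 ≤ N) (μ : ℝ) (hμ : 0 < μ)
    (ρ : ℝ → (Fin N → ℝ) → ℝ)
    (hρ : ContDiff ℝ (⊤ : ℕ∞) (fun p : ℝ × (Fin N → ℝ) => ρ p.1 p.2))
    (hpos : ∀ t x, 0 < ρ t x)
    (hheat : ∀ t x, dt ρ t x = μ * ∑ i, pd i (fun y => pd i (fun z => ρ t z) y) x)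
    (u : ℝ → (Fin N → ℝ) → Fin N → ℝ)
    (hu : ∀ t x i, u t x i = -μ * pd i (fun y => Real.log (ρ t y)) x) :
    ∀ t x (j : Fin N),
      ρ t x * dt (fun s y => u s y j) t x
        + ρ t x * ∑ i, u t x i * pd i (fun y => u t y j) x
        - μ * ∑ i, pd i (fun y => ρ t y * symGrad (u t) i j y) x = 0 := by
  -- joint-variable setup
  set F : ℝ × (Fin N → ℝ) → ℝ := fun q => ρ q.1 q.2 with hFdef
  have hF : ContDiff ℝ ∞ F := hρ.of_le (by simp)
  have hFpos : ∀ q, 0 < F q := fun q => hpos q.1 q.2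
  set L : ℝ × (Fin N → ℝ) → ℝ := fun q => Real.log (F q) with hLdef
  have hL : ContDiff ℝ ∞ L := hF.log fun q => (hFpos q).ne'
  set e : Fin N → ℝ × (Fin N → ℝ) := fun i => ((0 : ℝ), Pi.single i 1) with hedef
  set et : ℝ × (Fin N → ℝ) := ((1 : ℝ), (0 : Fin N → ℝ)) with hetdef
  -- u in terms of L
  have huL : ∀ s y i, u s y i = -μ * dd (e i) L (s, y) := by
    intro s y i
    rw [hu s y i, show (fun y' => Real.log (ρ s y')) = fun y' => L (s, y') from rfl,
      slice_pd (diffAt hL (s, y)) i]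
  -- joint heat equation for F
  have hheatF : ∀ q, dd et F q = μ * ∑ i, dd (e i) (dd (e i) F) q := by
    rintro ⟨a, b⟩
    have h1 := hheat a b
    rw [dt] at h1
    have h2 : deriv (fun s => ρ s b) a = dd et F (a, b) := slice_dt (diffAt hF (a, b))
    have h3 : ∀ i, pd i (fun y => pd i (fun z => ρ a z) y) b = dd (e i) (dd (e i) F) (a, b) := by
      intro i
      have hinner : (fun y => pd i (fun z => ρ a z) y) = fun y => dd (e i) F (a, y) :=
        funext fun y => slice_pd (diffAt hF (a, y)) i
      rw [hinner, slice_pd (diffAt (contDiff_dd hF (e i)) (a, b)) i]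
    rw [h2, Finset.sum_congr rfl (fun i _ => h3 i)] at h1
    exact h1
  -- F-derivatives in terms of L-derivatives
  have hFL : ∀ v q, dd v F q = F q * dd v L q := fun v q => dd_log hF hFpos v q
  -- heat equation for L
  have hheatL : ∀ q, dd et L q
      = μ * ∑ i, (dd (e i) (dd (e i) L) q + dd (e i) L q * dd (e i) L q) := by
    intro q
    have h1 := hheatF q
    rw [hFL et q] at h1
    have h2 : ∀ i, dd (e i) (dd (e i) F) q
        = F q * (dd (e i) (dd (e i) L) q + dd (e i) L q * dd (e i) L q) := by
      intro i
      have hf : (dd (e i) F : _ → ℝ) = fun r => F r * dd (e i) L r := funext fun r => hFL (e i) r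
      rw [hf, dd_mul (diffAt hF q) (diffAt (contDiff_dd hL (e i)) q), hFL (e i) q]
      ring
    rw [Finset.sum_congr rfl (fun i _ => h2 i), ← Finset.mul_sum, ← mul_assoc,
      mul_comm μ (F q), mul_assoc] at h1
    exact mul_left_cancel₀ (hFpos q).ne' h1
  intro t x j
  set p : ℝ × (Fin N → ℝ) := (t, x) with hpdef
  set Lj : ℝ × (Fin N → ℝ) → ℝ := dd (e j) L with hLjdef
  have hLjC : ContDiff ℝ ∞ Lj := contDiff_dd hL (e j)
  -- differentiate the L-heat equation in direction e j
  have key : dd et Lj p = μ * ∑ i,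
      (dd (e i) (dd (e i) Lj) p + 2 * dd (e i) L p * dd (e i) Lj p) := by
    have hfun : (dd et L : _ → ℝ)
        = fun q => μ * ∑ i, (dd (e i) (dd (e i) L) q + dd (e i) L q * dd (e i) L q) :=
      funext hheatL
    have hlhs : dd (e j) (dd et L) p = dd et Lj p := dd_comm hL et (e j) p
    have hdiffsummand : ∀ i : Fin N, DifferentiableAt ℝ
        (fun q => dd (e i) (dd (e i) L) q + dd (e i) L q * dd (e i) L q) p := by
      intro i
      exact ((diffAt (contDiff_dd (contDiff_dd hL (e i)) (e i)) p)).add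
        ((diffAt (contDiff_dd hL (e i)) p).mul (diffAt (contDiff_dd hL (e i)) p))
    have hrhs : dd (e j) (fun q => μ * ∑ i,
        (dd (e i) (dd (e i) L) q + dd (e i) L q * dd (e i) L q)) p
        = μ * ∑ i, (dd (e i) (dd (e i) Lj) p + 2 * dd (e i) L p * dd (e i) Lj p) := by
      rw [dd_const_mul (DifferentiableAt.fun_sum fun i _ => hdiffsummand i) μ]
      congr 1
      have hsum : dd (e j) (fun q => ∑ i,
          (dd (e i) (dd (e i) L) q + dd (e i) L q * dd (e i) L q)) p
          = ∑ i, dd (e j) (fun q => dd (e i) (dd (e i) L) q + dd (e i) L q * dd (e i) L q) p := by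
        show fderiv ℝ _ p (e j) = _
        rw [fderiv_fun_sum fun i _ => hdiffsummand i]
        simp [dd, ContinuousLinearMap.sum_apply]
      rw [hsum]
      refine Finset.sum_congr rfl fun i _ => ?_
      have hadd : dd (e j) (fun q => dd (e i) (dd (e i) L) q + dd (e i) L q * dd (e i) L q) p
          = dd (e j) (dd (e i) (dd (e i) L)) p
            + dd (e j) (fun q => dd (e i) L q * dd (e i) L q) p := by
        show fderiv ℝ _ p (e j) = _
        rw [fderiv_fun_add (g := fun q => dd (e i) L q * dd (e i) L q) (diffAt (contDiff_dd (contDiff_dd hL (e i)) (e i)) p)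
          ((diffAt (contDiff_dd hL (e i)) p).mul (diffAt (contDiff_dd hL (e i)) p))]
        rfl
      rw [hadd]
      have hmul : dd (e j) (fun q => dd (e i) L q * dd (e i) L q) p
          = 2 * dd (e i) L p * dd (e j) (dd (e i) L) p := by
        rw [dd_mul (diffAt (contDiff_dd hL (e i)) p) (diffAt (contDiff_dd hL (e i)) p)]
        ring
      rw [hmul]
      have hswap1 : dd (e j) (dd (e i) L) p = dd (e i) Lj p := dd_comm hL (e i) (e j) p
      have hswap3 : dd (e j) (dd (e i) (dd (e i) L)) p = dd (e i) (dd (e i) Lj) p := by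
        rw [dd_comm (contDiff_dd hL (e i)) (e i) (e j) p]
        have : (dd (e j) (dd (e i) L) : _ → ℝ) = dd (e i) Lj :=
          funext fun q => dd_comm hL (e i) (e j) q
        rw [this]
      rw [hswap1, hswap3]
    rw [← hlhs, hfun, hrhs]
  -- compute the three terms of the momentum equation
  have hT1 : dt (fun s y => u s y j) t x = -μ * dd et Lj p := by
    rw [dt]
    have h1 : (fun s => u s x j) = fun s => (fun q => -μ * Lj q) (s, x) :=
      funext fun s => huL s x j
    rw [h1, slice_dt (((diffAt hLjC (t, x))).const_mul (-μ)),
      dd_const_mul (diffAt hLjC (t, x)) (-μ)]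
  have hT2 : ∀ i, pd i (fun y => u t y j) x = -μ * dd (e i) Lj p := by
    intro i
    have h1 : (fun y => u t y j) = fun y => (fun q => -μ * Lj q) (t, y) :=
      funext fun y => huL t y j
    rw [h1, slice_pd (((diffAt hLjC (t, x))).const_mul (-μ)) i,
      dd_const_mul (diffAt hLjC (t, x)) (-μ)]
  have hT3 : ∀ i, pd i (fun y => ρ t y * symGrad (u t) i j y) x
      = F p * dd (e i) L p * (-μ * dd (e i) Lj p) + F p * (-μ * dd (e i) (dd (e i) Lj) p) := by
    intro i
    have hsg : ∀ y, ρ t y * symGrad (u t) i j y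
        = (fun q => F q * (-μ * dd (e i) Lj q)) (t, y) := by
      intro y
      have hpi : pd i (fun y' => u t y' j) y = -μ * dd (e i) Lj (t, y) := by
        have h1 : (fun y' => u t y' j) = fun y' => (fun q => -μ * Lj q) (t, y') :=
          funext fun y' => huL t y' j
        rw [h1, slice_pd (((diffAt hLjC (t, y))).const_mul (-μ)) i,
          dd_const_mul (diffAt hLjC (t, y)) (-μ)]
      have hpj : pd j (fun y' => u t y' i) y = -μ * dd (e j) (dd (e i) L) (t, y) := by
        have h1 : (fun y' => u t y' i) = fun y' => (fun q => -μ * dd (e i) L q) (t, y') :=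
          funext fun y' => huL t y' i
        rw [h1, slice_pd (((diffAt (contDiff_dd hL (e i)) (t, y))).const_mul (-μ)) j,
          dd_const_mul (diffAt (contDiff_dd hL (e i)) (t, y)) (-μ)]
      have hswap : dd (e j) (dd (e i) L) (t, y) = dd (e i) Lj (t, y) :=
        dd_comm hL (e i) (e j) (t, y)
      show ρ t y * symGrad (u t) i j y = F (t, y) * (-μ * dd (e i) Lj (t, y))
      rw [symGrad, hpi, hpj, hswap]
      show ρ t y * _ = ρ t y * _
      ring
    rw [funext hsg,
      slice_pd (g := fun q => F q * (-μ * dd (e i) Lj q)) ((diffAt hF (t, x)).mul ((diffAt (contDiff_dd hLjC (e i)) (t, x)).const_mul (-μ))) i]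
    rw [dd_mul (diffAt hF p) ((diffAt (contDiff_dd hLjC (e i)) p).const_mul (-μ)),
      dd_const_mul (diffAt (contDiff_dd hLjC (e i)) p) (-μ), hFL (e i) p]
  -- put it all together
  have hux : ∀ i, u t x i = -μ * dd (e i) L p := fun i => huL t x i
  rw [hT1, Finset.sum_congr rfl (fun i _ => by rw [hux i, hT2 i]),
    Finset.sum_congr rfl (fun i _ => hT3 i)]
  have hrx : ρ t x = F p := rfl
  rw [hrx, key]
  set SLB := ∑ i, dd (e i) L p * dd (e i) Lj p with hSLB
  set SC := ∑ i, dd (e i) (dd (e i) Lj) p with hSC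
  have e0 : ∑ i, (dd (e i) (dd (e i) Lj) p + 2 * dd (e i) L p * dd (e i) Lj p)
      = SC + 2 * SLB := by
    rw [Finset.sum_add_distrib]
    congr 1
    rw [hSLB, Finset.mul_sum]
    exact Finset.sum_congr rfl fun i _ => by ring
  have e1 : ∑ i, -μ * dd (e i) L p * (-μ * dd (e i) Lj p) = μ * μ * SLB := by
    rw [hSLB, Finset.mul_sum]
    exact Finset.sum_congr rfl fun i _ => by ring
  have e2 : ∑ i, (F p * dd (e i) L p * (-μ * dd (e i) Lj p)
        + F p * (-μ * dd (e i) (dd (e i) Lj) p))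
      = -μ * F p * SLB + -μ * F p * SC := by
    rw [Finset.sum_add_distrib, hSLB, hSC, Finset.mul_sum, Finset.mul_sum]
    congr 1
    · exact Finset.sum_congr rfl fun i _ => by ring
    · exact Finset.sum_congr rfl fun i _ => by ring
  rw [e0, e1, e2]
  ring
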